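/- arXiv:2004.11360 — 9 statements merged into one kernel-verified Lean document; each statement's English description precedes it below -/
import Mathlib

section
/- Let dA, dB ≥ 1, let c be the 3-cycle (0 1 2) on Fin 3, and let ρ be any complex square matrix indexed by Fin dA × Fin dB. Then Tr[(ρ^{T_B})³] = Tr[(W_c ⊗ W_{c⁻¹}) · R], where W_c is the permutation operator of local dimension dA, W_{c⁻¹} is the permutation operator of local dimension dB, and R is the reindexed 3-fold Kronecker power ρ^{⊗3}. (This is the paper's Eq. (2): the third moment of the partially transposed state equals the expectation of opposite cyclic permutations on the two subsystems.) -/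
open Matrix Kronecker

noncomputable section

/-- Permutation operator `W_π` of local index `I`: `W_π[b,a] = 1` iff `b = a ∘ π`. -/
def permOp (I : Type*) [DecidableEq I] {t : ℕ} (π : Equiv.Perm (Fin t)) :
    Matrix (Fin t → I) (Fin t → I) ℂ :=
  Matrix.of fun b a => if b = a ∘ ⇑π then 1 else 0

/-- `t`-fold Kronecker power of a matrix. -/
def kpow {I : Type*} (M : Matrix I I ℂ) (t : ℕ) :
    Matrix (Fin t → I) (Fin t → I) ℂ :=
  Matrix.of fun a b => ∏ i, M (a i) (b i)

/-- Partial transpose on the second (B) factor. -/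
def ptB {α β : Type*} (M : Matrix (α × β) (α × β) ℂ) : Matrix (α × β) (α × β) ℂ :=
  Matrix.of fun p q => M (p.1, q.2) (q.1, p.2)

/-- the 3-cycle (0 1 2) of `Fin 3` -/
def c3 : Equiv.Perm (Fin 3) := finRotate 3

private lemma sum_quad_swap {α β : Type*} [Fintype α] [Fintype β] (f : α → β → α → β → ℂ) :
    (∑ x2 : α, ∑ x3 : β, ∑ x4 : α, ∑ x5 : β, f x2 x3 x4 x5)
      = ∑ x2 : α, ∑ x3 : β, ∑ x4 : α, ∑ x5 : β, f x4 x5 x2 x3 := by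
  have key : ∀ g : α × β × α × β → ℂ,
      ∑ z, g z = ∑ x2 : α, ∑ x3 : β, ∑ x4 : α, ∑ x5 : β, g (x2, x3, x4, x5) := by
    intro g
    rw [Fintype.sum_prod_type]
    exact Finset.sum_congr rfl fun a _ => by
      rw [Fintype.sum_prod_type]
      exact Finset.sum_congr rfl fun b _ => by rw [Fintype.sum_prod_type]
  rw [← key fun z => f z.1 z.2.1 z.2.2.1 z.2.2.2,
      ← key fun z => f z.2.2.1 z.2.2.2 z.1 z.2.1]
  exact Fintype.sum_equiv ⟨fun z => (z.2.2.1, z.2.2.2, z.1, z.2.1),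
    fun z => (z.2.2.1, z.2.2.2, z.1, z.2.1), fun z => rfl, fun z => rfl⟩ _ _ (fun z => rfl)

theorem stmt_0 (dA dB : ℕ) (hA : 1 ≤ dA) (hB : 1 ≤ dB)
    (ρ : Matrix (Fin dA × Fin dB) (Fin dA × Fin dB) ℂ) :
    (ptB ρ ^ 3).trace =
      ((permOp (Fin dA) c3 ⊗ₖ permOp (Fin dB) c3⁻¹) *
        Matrix.reindex (Equiv.arrowProdEquivProdArrow (Fin 3) (fun _ => Fin dA) (fun _ => Fin dB))
          (Equiv.arrowProdEquivProdArrow (Fin 3) (fun _ => Fin dA) (fun _ => Fin dB)) (kpow ρ 3)).trace := by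
  -- Step 1: LHS as an explicit sum over triples (p, q, r).
  have hL : (ptB ρ ^ 3).trace =
      ∑ x : (Fin dA × Fin dB) × (Fin dA × Fin dB) × (Fin dA × Fin dB),
        ρ (x.1.1, x.2.1.2) (x.2.1.1, x.1.2) * ρ (x.2.1.1, x.2.2.2) (x.2.2.1, x.2.1.2) *
          ρ (x.2.2.1, x.1.2) (x.1.1, x.2.2.2) := by
    rw [pow_succ, pow_succ, pow_one]
    simp only [Matrix.trace, Matrix.diag, Matrix.mul_apply, ptB, Matrix.of_apply,
      Finset.sum_mul, Finset.mul_sum, Fintype.sum_prod_type]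
    refine Finset.sum_congr rfl fun x _ => Finset.sum_congr rfl fun x1 _ => ?_
    exact (sum_quad_swap fun x2 x3 x4 x5 =>
      ρ (x, x3) (x2, x1) * ρ (x2, x5) (x4, x3) * ρ (x4, x1) (x, x5)).symm
  -- Step 2: RHS as an explicit double sum over (a, b).
  have hR : ((permOp (Fin dA) c3 ⊗ₖ permOp (Fin dB) c3⁻¹) *
        Matrix.reindex (Equiv.arrowProdEquivProdArrow (Fin 3) (fun _ => Fin dA) (fun _ => Fin dB))
          (Equiv.arrowProdEquivProdArrow (Fin 3) (fun _ => Fin dA) (fun _ => Fin dB)) (kpow ρ 3)).trace =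
      ∑ a : Fin 3 → Fin dA, ∑ b : Fin 3 → Fin dB,
        ∏ i, ρ (a (c3⁻¹ i), b (c3 i)) (a i, b i) := by
    have hiffA : ∀ (a a' : Fin 3 → Fin dA), (a = a' ∘ ⇑c3) ↔ (a' = a ∘ ⇑c3⁻¹) := by
      intro a a'
      constructor <;> intro h <;> subst h <;> funext i <;> simp
    have hiffB : ∀ (b b' : Fin 3 → Fin dB), (b = b' ∘ ⇑c3⁻¹) ↔ (b' = b ∘ ⇑c3) := by
      intro b b'
      constructor <;> intro h <;> subst h <;> funext i <;> simp
    simp only [Matrix.trace, Matrix.diag, Matrix.mul_apply, Matrix.kroneckerMap_apply,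
      Matrix.reindex_apply, Matrix.submatrix_apply, permOp, kpow, Matrix.of_apply,
      Fintype.sum_prod_type, hiffA, hiffB, ite_mul, one_mul, zero_mul,
      Finset.sum_ite_eq', Finset.mem_univ, if_true, Equiv.arrowProdEquivProdArrow]
    simp [Equiv.coe_fn_symm_mk]
  rw [hL, hR]
  -- Step 3: match the two explicit sums via an explicit bijection.
  have key : ∀ g : (Fin 3 → Fin dA) × (Fin 3 → Fin dB) → ℂ,
      ∑ z, g z = ∑ a : Fin 3 → Fin dA, ∑ b : Fin 3 → Fin dB, g (a, b) := by
    intro g; rw [Fintype.sum_prod_type]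
  rw [← key fun z => ∏ i, ρ (z.1 (c3⁻¹ i), z.2 (c3 i)) (z.1 i, z.2 i)]
  refine Fintype.sum_equiv
    ⟨fun x => (![x.2.1.1, x.2.2.1, x.1.1], ![x.1.2, x.2.1.2, x.2.2.2]),
     fun y => ((y.1 2, y.2 0), (y.1 0, y.2 1), (y.1 1, y.2 2)),
     fun x => by
       refine Prod.ext (Prod.ext ?_ ?_) (Prod.ext (Prod.ext ?_ ?_) (Prod.ext ?_ ?_)) <;> simp,
     fun y => by
       refine Prod.ext ?_ ?_ <;> funext i <;> fin_cases i <;> rfl⟩ _ _ (fun x => ?_)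
  have h0 : c3 (0 : Fin 3) = 1 := rfl
  have h1 : c3 (1 : Fin 3) = 2 := rfl
  have h2 : c3 (2 : Fin 3) = 0 := rfl
  have h0' : c3⁻¹ (0 : Fin 3) = 2 := rfl
  have h1' : c3⁻¹ (1 : Fin 3) = 0 := rfl
  have h2' : c3⁻¹ (2 : Fin 3) = 1 := rfl
  simp only [Fin.prod_univ_three, h0, h1, h2, h0', h1', h2']
  simp [mul_comm, mul_assoc, mul_left_comm]
end
end

section
/- Let t ≥ 1, π a permutation of Fin t, and I_A, I_B finite index types. Let N be the reindexed permutation operator W_π of local index I_A × I_B, viewed as a matrix indexed by (Fin t → I_A) × (Fin t → I_B), and define its partial transpose on the B factor by N^{T_B}[(a,b),(a',b')] := N[(a,b'),(a',b)]. Then N^{T_B} = W_π^{A} ⊗ W_{π⁻¹}^{B}, i.e., the partial transpose on subsystem B of a permutation operator acting identically on both subsystems equals the Kronecker product of the permutation operator on A with the inverse-permutation operator on B. -/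
open Matrix Kronecker

noncomputable section

theorem ptB_kronecker {α β : Type*} (A : Matrix α α ℂ) (B : Matrix β β ℂ) :
    ptB (A ⊗ₖ B) = A ⊗ₖ Bᵀ := by
  ext ⟨a, b⟩ ⟨a', b'⟩
  rfl

theorem permOp_transpose (I : Type*) [DecidableEq I] {t : ℕ} (π : Equiv.Perm (Fin t)) :
    (permOp I π)ᵀ = permOp I π⁻¹ := by
  ext b a
  simp only [transpose_apply, permOp, of_apply, Equiv.Perm.inv_def, Equiv.eq_comp_symm, eq_comm]

theorem reindex_permOp_prod (I J : Type*) [DecidableEq I] [DecidableEq J] {t : ℕ}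
    (π : Equiv.Perm (Fin t)) :
    reindex (Equiv.arrowProdEquivProdArrow (Fin t) (fun _ => I) (fun _ => J))
        (Equiv.arrowProdEquivProdArrow (Fin t) (fun _ => I) (fun _ => J)) (permOp (I × J) π) =
      permOp I π ⊗ₖ permOp J π := by
  ext ⟨a, b⟩ ⟨a', b'⟩
  simp only [reindex_apply, submatrix_apply, kroneckerMap_apply, permOp, of_apply,
    Equiv.arrowProdEquivProdArrow, Equiv.coe_fn_symm_mk, funext_iff, Function.comp_apply,
    Prod.mk.injEq, forall_and, ite_zero_mul_ite_zero, mul_one]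

theorem stmt_1_general (t : ℕ) (π : Equiv.Perm (Fin t))
    (IA IB : Type*) [DecidableEq IA] [DecidableEq IB] :
    ptB (Matrix.reindex (Equiv.arrowProdEquivProdArrow (Fin t) (fun _ => IA) (fun _ => IB))
        (Equiv.arrowProdEquivProdArrow (Fin t) (fun _ => IA) (fun _ => IB)) (permOp (IA × IB) π)) =
      permOp IA π ⊗ₖ permOp IB π⁻¹ := by
  rw [reindex_permOp_prod, ptB_kronecker, permOp_transpose]

theorem stmt_1 (t : ℕ) (ht : 1 ≤ t) (π : Equiv.Perm (Fin t))
    (IA IB : Type*) [Fintype IA] [Fintype IB] [DecidableEq IA] [DecidableEq IB] :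
    ptB (Matrix.reindex (Equiv.arrowProdEquivProdArrow (Fin t) (fun _ => IA) (fun _ => IB))
        (Equiv.arrowProdEquivProdArrow (Fin t) (fun _ => IA) (fun _ => IB)) (permOp (IA × IB) π)) =
      permOp IA π ⊗ₖ permOp IB π⁻¹ :=
  stmt_1_general t π IA IB
end
end

section
/- Let t ≥ 1 and I_A, I_B finite index types. (i) For every permutation π of Fin t, the reindexed permutation operator W_π of local index I_A × I_B equals the Kronecker product W_π^{A} ⊗ W_π^{B}. (ii) Consequently, for t = 3 with c the 3-cycle (0 1 2), the operator identity W_c^A ⊗ W_{c⁻¹}^B + W_{c⁻¹}^A ⊗ W_c^B = (W_c^A + W_{c⁻¹}^A) ⊗ (W_c^B + W_{c⁻¹}^B) − reindex(W_c^{AB} + W_{c⁻¹}^{AB}) holds, i.e., M_neg = M_+^A ⊗ M_+^B − M_+^{AB} (the paper's decomposition Eq. (Decom1), up to an overall factor 1/2 on both sides). -/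
open Matrix Kronecker

noncomputable section

lemma key (IA IB : Type*) [DecidableEq IA] [DecidableEq IB] {t : ℕ}
    (π : Equiv.Perm (Fin t)) :
    Matrix.reindex (Equiv.arrowProdEquivProdArrow (Fin t) (fun _ => IA) (fun _ => IB))
        (Equiv.arrowProdEquivProdArrow (Fin t) (fun _ => IA) (fun _ => IB)) (permOp (IA × IB) π) =
      permOp IA π ⊗ₖ permOp IB π := by
  ext ⟨b1, b2⟩ ⟨a1, a2⟩
  simp only [Matrix.reindex_apply, Matrix.submatrix_apply, permOp, Matrix.of_apply,
    Matrix.kroneckerMap_apply, Equiv.arrowProdEquivProdArrow, Equiv.coe_fn_symm_mk]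
  rw [ite_zero_mul_ite_zero, one_mul]
  congr 1
  simp only [eq_iff_iff, funext_iff, Function.comp_apply, Prod.mk.injEq]
  constructor
  · intro h; exact ⟨fun n => (h n).1, fun n => (h n).2⟩
  · intro h n; exact ⟨h.1 n, h.2 n⟩

theorem stmt_2 (IA IB : Type*) [Fintype IA] [Fintype IB] [DecidableEq IA] [DecidableEq IB]
    (t : ℕ) (ht : 1 ≤ t) :
    (∀ π : Equiv.Perm (Fin t),
      Matrix.reindex (Equiv.arrowProdEquivProdArrow (Fin t) (fun _ => IA) (fun _ => IB))
          (Equiv.arrowProdEquivProdArrow (Fin t) (fun _ => IA) (fun _ => IB)) (permOp (IA × IB) π) =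
        permOp IA π ⊗ₖ permOp IB π) ∧
    (permOp IA c3 ⊗ₖ permOp IB c3⁻¹ + permOp IA c3⁻¹ ⊗ₖ permOp IB c3 =
      (permOp IA c3 + permOp IA c3⁻¹) ⊗ₖ (permOp IB c3 + permOp IB c3⁻¹) -
        Matrix.reindex (Equiv.arrowProdEquivProdArrow (Fin 3) (fun _ => IA) (fun _ => IB))
          (Equiv.arrowProdEquivProdArrow (Fin 3) (fun _ => IA) (fun _ => IB))
          (permOp (IA × IB) c3 + permOp (IA × IB) c3⁻¹)) := by
  refine ⟨fun π => key IA IB π, ?_⟩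
  have : Matrix.reindex (Equiv.arrowProdEquivProdArrow (Fin 3) (fun _ => IA) (fun _ => IB))
          (Equiv.arrowProdEquivProdArrow (Fin 3) (fun _ => IA) (fun _ => IB))
          (permOp (IA × IB) c3 + permOp (IA × IB) c3⁻¹)
      = permOp IA c3 ⊗ₖ permOp IB c3 + permOp IA c3⁻¹ ⊗ₖ permOp IB c3⁻¹ := by
    have h : ∀ A B : Matrix (Fin 3 → IA × IB) (Fin 3 → IA × IB) ℂ,
        Matrix.reindex (Equiv.arrowProdEquivProdArrow (Fin 3) (fun _ => IA) (fun _ => IB))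
          (Equiv.arrowProdEquivProdArrow (Fin 3) (fun _ => IA) (fun _ => IB)) (A + B) =
        Matrix.reindex (Equiv.arrowProdEquivProdArrow (Fin 3) (fun _ => IA) (fun _ => IB))
          (Equiv.arrowProdEquivProdArrow (Fin 3) (fun _ => IA) (fun _ => IB)) A +
        Matrix.reindex (Equiv.arrowProdEquivProdArrow (Fin 3) (fun _ => IA) (fun _ => IB))
          (Equiv.arrowProdEquivProdArrow (Fin 3) (fun _ => IA) (fun _ => IB)) B := by
      intro A B; ext i j; simp [Matrix.reindex_apply]
    rw [h, key, key]
  rw [this, Matrix.add_kronecker, Matrix.kronecker_add, Matrix.kronecker_add]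
  abel
end
end

section
/- For all d ≥ 1, t ≥ 1 and all permutations π, σ of Fin t, the trace of the matrix product W_π · W_σ (permutation operators of local dimension d) equals d^{c(π∘σ)}, where c(π∘σ) is the number of cycles of the composite permutation π∘σ. (This is the Gram matrix Q_{π,σ} = d^{cycles(πσ)} of the permutation operators, used throughout the paper's Weingarten calculus.) -/
open Matrix

noncomputable section

/-- The number of cycles of a permutation of `Fin t`: the number of orbits of the
subgroup it generates (fixed points count as cycles of length 1). -/
def cycleCount {t : ℕ} (τ : Equiv.Perm (Fin t)) : ℕ :=
  Nat.card (MulAction.orbitRel.Quotient (Subgroup.zpowers τ) (Fin t))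

/-! Since `W_π * W_σ = W_{σπ}`, cyclicity of the trace gives `tr (W_π W_σ) = tr W_{πσ}`, and the
trace of `W_τ` counts the colourings `a : Fin t → Fin d` with `a ∘ τ = a`, i.e. the colourings
constant on the cycles of `τ`. -/

lemma comp_zpow_eq_self {α β : Type*} {a : α → β} {τ : Equiv.Perm α} (h : a ∘ ⇑τ = a) (k : ℤ) :
    a ∘ ⇑(τ ^ k) = a := by
  have h_inv : a ∘ ⇑τ⁻¹ = a := by
    conv_lhs => rw [← h]
    ext x; simp
  induction k using Int.induction_on with
  | zero => rfl
  | succ k ih => rw [_root_.zpow_add_one, Equiv.Perm.coe_mul, ← Function.comp_assoc, ih, h]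
  | pred k ih => rw [_root_.zpow_sub_one, Equiv.Perm.coe_mul, ← Function.comp_assoc, ih, h_inv]

lemma comp_eq_self_iff_orbitRel_le_ker {α β : Type*} (a : α → β) (τ : Equiv.Perm α) :
    a ∘ ⇑τ = a ↔ MulAction.orbitRel (Subgroup.zpowers τ) α ≤ Setoid.ker a := by
  constructor
  · rintro h x y hxy
    obtain ⟨⟨g, hg⟩, rfl⟩ := MulAction.orbitRel_apply.mp hxy
    obtain ⟨k, rfl⟩ := Subgroup.mem_zpowers_iff.mp hg
    exact congrFun (comp_zpow_eq_self h k) y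
  · intro h
    funext x
    exact h (MulAction.orbitRel_apply.mpr ⟨⟨τ, Subgroup.mem_zpowers τ⟩, rfl⟩)

lemma card_comp_eq_self (I : Type*) {t : ℕ} (τ : Equiv.Perm (Fin t)) :
    Nat.card {a : Fin t → I // a ∘ ⇑τ = a} = Nat.card I ^ cycleCount τ := by
  rw [cycleCount, ← Nat.card_fun]
  exact Nat.card_congr <|
    (Equiv.subtypeEquivRight fun a => comp_eq_self_iff_orbitRel_le_ker a τ).trans
      (Setoid.liftEquiv _)

lemma permOp_mul_permOp (I : Type*) [DecidableEq I] [Fintype I] {t : ℕ}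
    (π σ : Equiv.Perm (Fin t)) : permOp I π * permOp I σ = permOp I (σ * π) := by
  ext b a
  simp only [permOp, Matrix.mul_apply, Matrix.of_apply, mul_ite, mul_one, mul_zero,
    Finset.sum_ite_eq', Finset.mem_univ, if_true, Equiv.Perm.coe_mul]
  rfl

lemma trace_permOp (I : Type*) [DecidableEq I] [Fintype I] {t : ℕ} (τ : Equiv.Perm (Fin t)) :
    (permOp I τ).trace = (Fintype.card I : ℂ) ^ cycleCount τ := by
  have hcount : (Finset.univ.filter fun a : Fin t → I => a = a ∘ ⇑τ).card =
      Fintype.card I ^ cycleCount τ := by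
    rw [← Nat.card_eq_fintype_card, ← card_comp_eq_self, Nat.card_eq_fintype_card,
      Fintype.card_subtype]
    simp only [eq_comm]
  simp only [Matrix.trace, Matrix.diag, permOp, Matrix.of_apply, Finset.sum_boole, hcount]
  push_cast; rfl

theorem stmt_3_general (d t : ℕ) (π σ : Equiv.Perm (Fin t)) :
    (permOp (Fin d) π * permOp (Fin d) σ).trace = (d : ℂ) ^ cycleCount (π * σ) := by
  rw [Matrix.trace_mul_comm, permOp_mul_permOp, trace_permOp, Fintype.card_fin]

theorem stmt_3 (d t : ℕ) (hd : 1 ≤ d) (ht : 1 ≤ t) (π σ : Equiv.Perm (Fin t)) :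
    (permOp (Fin d) π * permOp (Fin d) σ).trace = (d : ℂ) ^ cycleCount (π * σ) :=
  stmt_3_general d t π σ
end
end

section
/- For every d ≥ 1, t ≥ 1, every complex d × d matrix M, and every permutation π of Fin t, the trace Tr[W_π · M^{⊗t}] equals the product, over the orbits O of π acting on Fin t, of Tr[M^{|O|}] (fixed points contributing a factor Tr[M]). In particular, for π a single t-cycle, Tr[W_π M^{⊗t}] = Tr[M^t]. -/
/-!
Expanding the trace gives `Tr[W_π M^{⊗t}] = ∑_a ∏_i M (a i) (a (π i))`. This sum factors over
any partition of the sites into `π`-invariant blocks, in particular over the orbits of `π`. An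
orbit of length `n` is identified with `ZMod n`, on which `π` acts as `x ↦ x + 1`, and there the
sum runs over closed paths of length `n`, which is `Tr[M^n]`.
-/

open Matrix

noncomputable section

variable {I R : Type*} [Fintype I] [CommSemiring R]

def cycleTrace {α : Type*} [Fintype α] [DecidableEq α] (M : Matrix I I R) (σ : Equiv.Perm α) :
    R :=
  ∑ a : α → I, ∏ i, M (a i) (a (σ i))

theorem trace_permOp_mul_kpow [DecidableEq I] {t : ℕ} (π : Equiv.Perm (Fin t))
    (M : Matrix I I ℂ) : (permOp I π * kpow M t).trace = cycleTrace M π := by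
  have hcomp : ∀ a b : Fin t → I, a = b ∘ π ↔ b = a ∘ π.symm := fun a b => by
    rw [← Equiv.comp_symm_eq, eq_comm]
  simp only [trace, Matrix.diag, mul_apply, permOp, kpow, of_apply, ite_mul, one_mul, zero_mul,
    hcomp, Finset.sum_ite_eq', Finset.mem_univ, if_true, cycleTrace]
  exact Finset.sum_congr rfl fun a _ => Fintype.prod_equiv π.symm _ _ fun i => by simp

theorem cycleTrace_eq_of_semiconj {α β : Type*} [Fintype α] [DecidableEq α] [Fintype β]
    [DecidableEq β] (M : Matrix I I R) {σ : Equiv.Perm α} {τ : Equiv.Perm β} (e : α ≃ β)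
    (he : Function.Semiconj e σ τ) : cycleTrace M σ = cycleTrace M τ := by
  refine Fintype.sum_equiv (e.arrowCongr (Equiv.refl I)) _ _ fun a => ?_
  refine Fintype.prod_equiv e _ _ fun i => ?_
  simp [← he.eq]

theorem cycleTrace_eq_prod_fiber {α β : Type*} [Fintype α] [DecidableEq α] [Fintype β]
    [DecidableEq β] (M : Matrix I I R) (σ : Equiv.Perm α) (f : α → β)
    (hf : ∀ x, f (σ x) = f x) :
    cycleTrace M σ =
      ∏ b, cycleTrace M (σ.subtypePerm (p := fun x => f x = b) fun x => by rw [hf]) := by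
  let E : (∀ b, {x // f x = b} → I) ≃ (α → I) :=
    (Equiv.piCurry fun _ _ => I).symm.trans ((Equiv.sigmaFiberEquiv f).arrowCongr (Equiv.refl I))
  have hE : ∀ g b (x : {x // f x = b}), E g x = g b x := by
    rintro g b ⟨x, rfl⟩
    rfl
  simp only [cycleTrace, Fintype.prod_sum]
  refine (Fintype.sum_equiv E _ _ fun g => ?_).symm
  rw [← (Equiv.sigmaFiberEquiv f).prod_comp, Fintype.prod_sigma]
  refine Finset.prod_congr rfl fun b _ => Finset.prod_congr rfl fun x _ => ?_
  rw [Equiv.sigmaFiberEquiv_apply, hE, ← hE g b (σ.subtypePerm _ x)]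
  rfl

open MulAction in
theorem isPretransitive_subtypePerm_orbit {α : Type*} (σ : Equiv.Perm α)
    (O : orbitRel.Quotient (Subgroup.zpowers σ) α)
    (h : ∀ x, Quotient.mk'' (σ x) = O ↔ Quotient.mk'' x = O) :
    IsPretransitive (Subgroup.zpowers (σ.subtypePerm (p := fun x => Quotient.mk'' x = O) h))
      {x // Quotient.mk'' x = O} := by
  refine ⟨fun x y => ?_⟩
  obtain ⟨⟨_, k, rfl⟩, hk⟩ : y.1 ∈ orbit (Subgroup.zpowers σ) x.1 :=
    Quotient.exact' (y.2.trans x.2.symm)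
  exact ⟨⟨_, k, rfl⟩, Subtype.ext (by simpa [Subgroup.smul_def, Equiv.Perm.smul_def] using hk)⟩

section Power

variable [DecidableEq I]

theorem trace_pow_mul_eq_sum_path (M N : Matrix I I R) (n : ℕ) :
    (M ^ n * N).trace = ∑ h : Fin (n + 1) → I,
      (∏ j : Fin n, M (h j.castSucc) (h j.succ)) * N (h (Fin.last n)) (h 0) := by
  induction n generalizing N with
  | zero =>
    simp only [pow_zero, one_mul, Finset.univ_eq_empty, Finset.prod_empty]
    exact (Fintype.sum_equiv (Equiv.funUnique (Fin 1) I) _ _ fun h => by simp [Fin.last]).symm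
  | succ n ih =>
    rw [pow_succ, mul_assoc, ih]
    conv_rhs => rw [← (Fin.snocEquiv fun _ => I).sum_comp, Fintype.sum_prod_type_right]
    refine Finset.sum_congr rfl fun h _ => ?_
    simp [Fin.snocEquiv, Fin.prod_univ_castSucc, mul_apply, Finset.mul_sum, mul_assoc,
      ← Fin.castSucc_succ]

theorem cycleTrace_fin_addRight_one (M : Matrix I I R) (n : ℕ) :
    cycleTrace M (Equiv.addRight (1 : Fin (n + 1))) = (M ^ (n + 1)).trace := by
  rw [pow_succ, trace_pow_mul_eq_sum_path, cycleTrace]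
  refine Finset.sum_congr rfl fun h _ => ?_
  simp [Fin.prod_univ_castSucc, Fin.coeSucc_eq_succ, Fin.last_add_one]

theorem cycleTrace_zmod_addRight_one (M : Matrix I I R) (n : ℕ) [NeZero n] :
    cycleTrace M (Equiv.addRight (1 : ZMod n)) = (M ^ n).trace := by
  obtain ⟨k, rfl⟩ := Nat.exists_eq_succ_of_ne_zero (NeZero.ne n)
  exact cycleTrace_fin_addRight_one M k

theorem cycleTrace_eq_trace_pow_card {α : Type*} [Fintype α] [DecidableEq α] [Nonempty α]
    (M : Matrix I I R) (σ : Equiv.Perm α) [MulAction.IsPretransitive (Subgroup.zpowers σ) α] :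
    cycleTrace M σ = (M ^ Fintype.card α).trace := by
  obtain ⟨b⟩ := ‹Nonempty α›
  have horbit := MulAction.orbit_eq_univ (Subgroup.zpowers σ) b
  let e := ((Equiv.Set.univ α).symm.trans (Equiv.setCongr horbit.symm)).trans
    (MulAction.orbitZPowersEquiv σ b)
  have : NeZero (Function.minimalPeriod (σ • ·) b) := MulAction.minimalPeriod_pos σ b
  have hcard : Fintype.card α = Function.minimalPeriod (σ • ·) b := by
    rw [Fintype.card_congr e, ZMod.card]
  have he_symm : ∀ j : ℤ, e.symm j = (σ ^ j) b := fun j => by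
    simp only [e, Equiv.symm_trans_apply, MulAction.orbitZPowersEquiv_symm_apply']
    rfl
  rw [hcard, ← cycleTrace_zmod_addRight_one]
  refine cycleTrace_eq_of_semiconj M e fun x => e.symm.injective ?_
  obtain ⟨j, hj⟩ := ZMod.intCast_surjective (e x)
  have hx : x = (σ ^ j) b := by rw [← he_symm, hj, e.symm_apply_apply]
  rw [e.symm_apply_apply]
  change σ x = e.symm (e x + 1)
  rw [← hj, ← Int.cast_one, ← Int.cast_add, he_symm, hx, add_comm, _root_.zpow_one_add,
    Equiv.Perm.mul_apply]

open MulAction in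
theorem cycleTrace_eq_finprod_orbit {α : Type*} [Fintype α] [DecidableEq α] (M : Matrix I I R)
    (σ : Equiv.Perm α) :
    cycleTrace M σ =
      ∏ᶠ O : orbitRel.Quotient (Subgroup.zpowers σ) α, (M ^ O.orbit.ncard).trace := by
  classical
  have hσ : ∀ x, (Quotient.mk'' (σ x) : orbitRel.Quotient (Subgroup.zpowers σ) α) =
      Quotient.mk'' x :=
    fun x => Quotient.sound' ⟨⟨σ, Subgroup.mem_zpowers σ⟩, rfl⟩
  let := Fintype.ofFinite (orbitRel.Quotient (Subgroup.zpowers σ) α)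
  rw [cycleTrace_eq_prod_fiber M σ _ hσ, finprod_eq_prod_of_fintype]
  refine Finset.prod_congr rfl fun O _ => ?_
  have : Nonempty {x // Quotient.mk'' x = O} := ⟨⟨O.out, Quotient.out_eq' O⟩⟩
  have := isPretransitive_subtypePerm_orbit σ O fun x => by rw [hσ]
  rw [cycleTrace_eq_trace_pow_card, ← Nat.card_coe_set_eq, ← Nat.card_eq_fintype_card,
    Nat.card_congr (Equiv.subtypeEquivRight fun _ => orbitRel.Quotient.mem_orbit.symm)]

end Power

theorem stmt_4_general (d t : ℕ)
    (M : Matrix (Fin d) (Fin d) ℂ) (π : Equiv.Perm (Fin t)) :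
    (permOp (Fin d) π * kpow M t).trace =
      ∏ᶠ O : MulAction.orbitRel.Quotient (Subgroup.zpowers π) (Fin t),
        (M ^ O.orbit.ncard).trace := by
  rw [trace_permOp_mul_kpow, cycleTrace_eq_finprod_orbit]

theorem stmt_4 (d t : ℕ) (hd : 1 ≤ d) (ht : 1 ≤ t)
    (M : Matrix (Fin d) (Fin d) ℂ) (π : Equiv.Perm (Fin t)) :
    (permOp (Fin d) π * kpow M t).trace =
      ∏ᶠ O : MulAction.orbitRel.Quotient (Subgroup.zpowers π) (Fin t),
        (M ^ O.orbit.ncard).trace :=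
  stmt_4_general d t M π
end
end

section
/- Let dA, dB ≥ 2 and let c be the 3-cycle (0 1 2) of Fin 3. Set M_neg := W_c^A ⊗ W_{c⁻¹}^B + W_{c⁻¹}^A ⊗ W_c^B, where W^A are permutation operators of local dimension dA and W^B of local dimension dB. Then there exists NO diagonal matrix O, indexed by (Fin 3 → Fin dA) × (Fin 3 → Fin dB) (i.e., diagonal in the tensor-product computational basis), such that Tr[O · (W_π^A ⊗ W_σ^B)] = Tr[M_neg · (W_π^A ⊗ W_σ^B)] for all permutations π, σ of Fin 3. (This is the algebraic core of the paper's no-go Proposition 2: the negativity operator cannot be produced by bi-local random unitaries with computational-basis post-processing.) -/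
/-!
A diagonal observable only sees, for each basis vector `(a, b)`, whether `a` and `b` are fixed
by the permutations `π` and `σ`. A tuple is fixed by `σ` iff it is fixed by `σ⁻¹`, so the
diagonal side takes the same value at `(c, c)` and at `(c, c⁻¹)`. On the operator side,
`W_π W_ρ = W_{ρπ}` and `Tr W_1 = d³`, `Tr W_c = Tr W_{c⁻¹} = d`, so the two values are
`dA dB³ + dA³ dB` and `dA dB + dA³ dB³`; they differ by `(dA³ - dA)(dB³ - dB)`, which is
nonzero once `dA, dB ≥ 2`.
-/

open Matrix Kronecker

noncomputable section

open Finset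

section PermOp

variable {I : Type*} [DecidableEq I] {t : ℕ}

lemma eq_comp_perm_inv_iff {α : Type*} (a : Fin t → α) (π : Equiv.Perm (Fin t)) :
    a = a ∘ ⇑π⁻¹ ↔ a = a ∘ ⇑π := by
  constructor <;> intro h <;> ext i
  · simpa using (congrFun h (π i)).symm
  · simpa using (congrFun h (π⁻¹ i)).symm

lemma permOp_mul [Fintype I] (π ρ : Equiv.Perm (Fin t)) :
    permOp I π * permOp I ρ = permOp I (ρ * π) := by
  ext b a
  simp only [Matrix.mul_apply, permOp, Matrix.of_apply, mul_ite, mul_one, mul_zero]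
  rw [sum_ite_eq' univ (a ∘ ⇑ρ) (fun x => if b = x ∘ ⇑π then (1 : ℂ) else 0)]
  simp only [mem_univ, if_true, Equiv.Perm.coe_mul, Function.comp_assoc]
  congr

lemma trace_permOp_s8 [Fintype I] (π : Equiv.Perm (Fin t)) :
    (permOp I π).trace = #{a : Fin t → I | a = a ∘ ⇑π} := by
  simp [Matrix.trace, permOp, sum_boole]

lemma trace_permOp_one [Fintype I] :
    (permOp I (1 : Equiv.Perm (Fin t))).trace = (Fintype.card I : ℂ) ^ t := by
  simp [trace_permOp_s8]

lemma trace_permOp_inv [Fintype I] (π : Equiv.Perm (Fin t)) :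
    (permOp I π⁻¹).trace = (permOp I π).trace := by
  simp only [trace_permOp_s8, eq_comp_perm_inv_iff]

lemma trace_mul_kronecker_permOp {J : Type*} [DecidableEq J] [Fintype I] [Fintype J]
    (π σ π' σ' : Equiv.Perm (Fin t)) :
    ((permOp I π ⊗ₖ permOp J σ) * (permOp I π' ⊗ₖ permOp J σ')).trace =
      (permOp I (π' * π)).trace * (permOp J (σ' * σ)).trace := by
  rw [← mul_kronecker_mul, trace_kronecker, permOp_mul, permOp_mul]

lemma trace_diagonal_mul_kronecker_permOp_inv {J : Type*} [DecidableEq J] [Fintype I] [Fintype J]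
    (f : (Fin t → I) × (Fin t → J) → ℂ) (π σ : Equiv.Perm (Fin t)) :
    (diagonal f * (permOp I π ⊗ₖ permOp J σ⁻¹)).trace =
      (diagonal f * (permOp I π ⊗ₖ permOp J σ)).trace := by
  simp only [Matrix.trace, Matrix.diag, diagonal_mul, kroneckerMap_apply, permOp, of_apply,
    eq_comp_perm_inv_iff]

lemma eq_comp_c3_iff {α : Type*} (a : Fin 3 → α) :
    a = a ∘ ⇑c3 ↔ ∃ x, Function.const _ x = a := by
  constructor
  · intro h
    have h01 : a 0 = a 1 := by simpa [c3] using congrFun h 0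
    have h12 : a 1 = a 2 := by simpa [c3] using congrFun h 1
    refine ⟨a 0, funext fun i => ?_⟩
    fin_cases i <;> simp [h01, h12]
  · rintro ⟨x, rfl⟩
    rfl

lemma trace_permOp_c3 [Fintype I] : (permOp I c3).trace = Fintype.card I := by
  have hfix : ({a : Fin 3 → I | a = a ∘ ⇑c3} : Finset _) =
      univ.map ⟨Function.const (Fin 3), Function.const_injective⟩ := by
    ext a
    simp [eq_comp_c3_iff]
  rw [trace_permOp_s8, hfix, card_map, card_univ]

end PermOp

lemma c3_mul_self : c3 * c3 = c3⁻¹ := by decide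

lemma c3_inv_mul_self : c3⁻¹ * c3⁻¹ = c3 := by decide

lemma mul_pow_three_add_ne {a b : ℕ} (ha : 2 ≤ a) (hb : 2 ≤ b) :
    a * b ^ 3 + a ^ 3 * b ≠ a * b + a ^ 3 * b ^ 3 := by
  intro h
  zify at h
  have hprod : ((a : ℤ) ^ 3 - a) * ((b : ℤ) ^ 3 - b) = 0 := by linear_combination -h
  have hpos : ∀ n : ℕ, 2 ≤ n → 0 < (n : ℤ) ^ 3 - n := fun n hn => by
    have hn' : (2 : ℤ) ≤ n := by exact_mod_cast hn
    rw [show (n : ℤ) ^ 3 - n = n * (n - 1) * (n + 1) by ring]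
    exact mul_pos (mul_pos (by linarith) (by linarith)) (by linarith)
  exact (mul_pos (hpos a ha) (hpos b hb)).ne' hprod

theorem stmt_8 (dA dB : ℕ) (hA : 2 ≤ dA) (hB : 2 ≤ dB) :
    ¬ ∃ f : (Fin 3 → Fin dA) × (Fin 3 → Fin dB) → ℂ,
      ∀ π σ : Equiv.Perm (Fin 3),
        (Matrix.diagonal f * (permOp (Fin dA) π ⊗ₖ permOp (Fin dB) σ)).trace =
          ((permOp (Fin dA) c3 ⊗ₖ permOp (Fin dB) c3⁻¹ +
              permOp (Fin dA) c3⁻¹ ⊗ₖ permOp (Fin dB) c3) *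
            (permOp (Fin dA) π ⊗ₖ permOp (Fin dB) σ)).trace := by
  rintro ⟨f, h⟩
  have hrhs := (h c3 c3).symm.trans
    ((trace_diagonal_mul_kronecker_permOp_inv f c3 c3).symm.trans (h c3 c3⁻¹))
  simp only [add_mul, trace_add, trace_mul_kronecker_permOp, c3_mul_self, c3_inv_mul_self,
    mul_inv_cancel, inv_mul_cancel, trace_permOp_one, trace_permOp_inv, trace_permOp_c3,
    Fintype.card_fin] at hrhs
  exact mul_pow_three_add_ne hA hB (by exact_mod_cast hrhs)
end
end

section
/- Let d ≥ 1, let g : Fin d → ℝ with g i ≥ 0 for all i, and let U ∈ Matrix.unitaryGroup (Fin d) ℂ. Define the vector ψ indexed by Fin d × Fin d by ψ(i,j) = g(i) · U[j,i] (the Schmidt-decomposed bipartite pure state Σ_i g_i |i⟩ ⊗ U|i⟩), and let Ψ := ψψ† be the associated rank-one matrix. Then for every t ≥ 1 and all permutations π, σ of Fin t, Tr[(W_π ⊗ W_σ) · R] equals the product, over the orbits O of the permutation σ∘π⁻¹ acting on Fin t, of Σ_{i : Fin d} g(i)^{2|O|}, where R is the reindexed t-fold Kronecker power Ψ^{⊗t}.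 (Paper's Proposition 12: the bipartite permutation moments of a pure state are products of Schmidt-coefficient power sums determined by the cycle structure of σπ⁻¹.) -/
/-!
Expanding the trace gives `∑ a b, ∏ i, Ψ (a i, b i) (a (π i), b (σ i))`. In the sum over the
second-factor indices `b`, unitarity of `U` (`Uᴴ U = 1`) collapses everything to the indicator of
`a ∘ π = a ∘ σ`, i.e. of `a` being constant on the cycles of `σ * π⁻¹`. Such `a` are
arbitrary colourings of the orbits, so the remaining sum of `∏ i, g (a i) ^ 2` factorises over
the orbits into power sums `∑ i, g i ^ (2 |O|)`.
-/

open Matrix Kronecker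

noncomputable section

/-- The Schmidt-decomposed bipartite pure vector `ψ(i,j) = g i · U[j,i]`. -/
def schmidtVec (d : ℕ) (g : Fin d → ℝ) (U : Matrix.unitaryGroup (Fin d) ℂ) :
    Fin d × Fin d → ℂ :=
  fun p => (g p.1 : ℂ) * (U : Matrix (Fin d) (Fin d) ℂ) p.2 p.1

/-- The rank-one matrix `ψψ†`. -/
def schmidtProj (d : ℕ) (g : Fin d → ℝ) (U : Matrix.unitaryGroup (Fin d) ℂ) :
    Matrix (Fin d × Fin d) (Fin d × Fin d) ℂ :=
  Matrix.of fun x y => schmidtVec d g U x * (starRingEnd ℂ) (schmidtVec d g U y)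

open Equiv MulAction

theorem Fintype.sum_prod_comp_eq_prod_sum_pow {α β ι R : Type*} [Fintype α] [Fintype β]
    [DecidableEq β] [Fintype ι] [CommSemiring R] (q : α → β) (h : ι → R) :
    ∑ c : β → ι, ∏ x, h (c (q x)) = ∏ b, ∑ i, h i ^ Nat.card {x // q x = b} := by
  rw [Fintype.prod_sum]
  refine Fintype.sum_congr _ _ fun c => ?_
  rw [← Fintype.prod_fiberwise' q (fun b => h (c b))]
  simp only [Finset.prod_const, Finset.card_univ, Fintype.card_eq_nat_card]

theorem MulAction.orbitRel.Quotient.card_fiber_eq_ncard_orbit {G α : Type*} [Group G]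
    [MulAction G α] (O : orbitRel.Quotient G α) :
    Nat.card {x // (Quotient.mk'' x : orbitRel.Quotient G α) = O} = O.orbit.ncard := by
  rw [← Nat.card_coe_set_eq]
  exact Nat.card_congr (Equiv.subtypeEquivRight fun _ => orbitRel.Quotient.mem_orbit.symm)

theorem Equiv.Perm.comp_zpow_eq_self_of_comp_eq_self {α ι : Type*} {τ : Perm α} {a : α → ι}
    (h : a ∘ τ = a) (n : ℤ) : a ∘ ⇑(τ ^ n) = a := by
  have h_inv : a ∘ ⇑τ⁻¹ = a := by
    rw [← h, Function.comp_assoc, ← Perm.coe_mul, mul_inv_cancel, Perm.coe_one,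
      Function.comp_id, h]
  induction n using Int.induction_on with
  | zero => rfl
  | succ n ih => rw [_root_.zpow_add_one, Perm.coe_mul, ← Function.comp_assoc, ih, h]
  | pred n ih => rw [_root_.zpow_sub_one, Perm.coe_mul, ← Function.comp_assoc, ih, h_inv]

theorem MulAction.orbitRel_zpowers_le_ker_iff {α ι : Type*} {τ : Perm α} {a : α → ι} :
    orbitRel (Subgroup.zpowers τ) α ≤ Setoid.ker a ↔ a ∘ τ = a := by
  refine ⟨fun h => funext fun x => h ⟨⟨τ, Subgroup.mem_zpowers τ⟩, rfl⟩,
    fun h x y hxy => ?_⟩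
  obtain ⟨⟨_, n, rfl⟩, rfl⟩ := hxy
  exact congrFun (Perm.comp_zpow_eq_self_of_comp_eq_self h n) y

theorem Equiv.Perm.comp_eq_comp_iff_comp_mul_inv_eq {α ι : Type*} (π σ : Perm α)
    (a : α → ι) :
    a ∘ π = a ∘ σ ↔ a ∘ ⇑(σ * π⁻¹) = a := by
  rw [Perm.coe_mul, ← Function.comp_assoc, Perm.coe_inv, comp_symm_eq, eq_comm]

theorem Equiv.Perm.sum_prod_of_comp_eq_self {α ι R : Type*} [Fintype α] [DecidableEq α]
    [Fintype ι] [DecidableEq ι] [CommSemiring R] (τ : Perm α) (h : ι → R) :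
    ∑ a : α → ι with a ∘ τ = a, ∏ x, h (a x) =
      ∏ᶠ O : orbitRel.Quotient (Subgroup.zpowers τ) α, ∑ i, h i ^ O.orbit.ncard := by
  classical
  have := Fintype.ofFinite (orbitRel.Quotient (Subgroup.zpowers τ) α)
  simp_rw [finprod_eq_prod_of_fintype, ← orbitRel.Quotient.card_fiber_eq_ncard_orbit,
    ← Fintype.sum_prod_comp_eq_prod_sum_pow]
  rw [Finset.sum_subtype (p := fun a => a ∘ τ = a) _ (fun _ => by simp)]
  exact Fintype.sum_equiv ((subtypeEquivRight fun _ => orbitRel_zpowers_le_ker_iff.symm).trans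
    (Setoid.liftEquiv _)) _ _ fun _ => rfl

theorem Matrix.sum_prod_star_mul_of_mem_unitaryGroup {κ n R : Type*} [Fintype κ] [DecidableEq κ]
    [Fintype n] [DecidableEq n] [CommRing R] [StarRing R] {U : Matrix n n R}
    (hU : U ∈ unitaryGroup n R) (x y : κ → n) :
    ∑ b : κ → n, ∏ i, star (U (b i) (y i)) * U (b i) (x i) = if y = x then 1 else 0 := by
  have hU' : Uᴴ * U = 1 := mem_unitaryGroup_iff'.mp hU
  calc ∑ b : κ → n, ∏ i, star (U (b i) (y i)) * U (b i) (x i)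
      = ∏ i, ∑ k, star (U k (y i)) * U k (x i) :=
        (Fintype.prod_sum fun i k => star (U k (y i)) * U k (x i)).symm
    _ = ∏ i, (Uᴴ * U) (y i) (x i) := by simp only [mul_apply, conjTranspose_apply]
    _ = if y = x then 1 else 0 := by simp [hU', one_apply, Finset.prod_boole, funext_iff]

theorem trace_kronecker_permOp_mul {I J : Type*} [Fintype I] [DecidableEq I] [Fintype J]
    [DecidableEq J] {t : ℕ} (π σ : Perm (Fin t))
    (N : Matrix ((Fin t → I) × (Fin t → J)) ((Fin t → I) × (Fin t → J)) ℂ) :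
    ((permOp I π ⊗ₖ permOp J σ) * N).trace = ∑ y, N y (y.1 ∘ π, y.2 ∘ σ) := by
  simp only [trace, diag, mul_apply, kroneckerMap_apply, permOp, of_apply, ite_zero_mul_ite_zero,
    one_mul]
  rw [Finset.sum_comm]
  refine Fintype.sum_congr _ _ fun y => ?_
  simp [Fintype.sum_prod_type, ite_and]

theorem schmidtProj_apply (d : ℕ) (g : Fin d → ℝ) (U : unitaryGroup (Fin d) ℂ)
    (i j i' j' : Fin d) :
    schmidtProj d g U (i, j) (i', j') = (g i * g i' : ℂ) *
      (star ((U : Matrix (Fin d) (Fin d) ℂ) j' i') * (U : Matrix (Fin d) (Fin d) ℂ) j i) := by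
  simp only [schmidtProj, schmidtVec, of_apply, map_mul, Complex.conj_ofReal, Complex.star_def]
  ring

theorem sum_prod_schmidtProj (d : ℕ) (g : Fin d → ℝ) (U : unitaryGroup (Fin d) ℂ) {t : ℕ}
    (π σ : Perm (Fin t)) (a : Fin t → Fin d) :
    ∑ b : Fin t → Fin d, ∏ i, schmidtProj d g U (a i, b i) (a (π i), b (σ i)) =
      if a ∘ ⇑(σ * π⁻¹) = a then ∏ i, (g (a i) : ℂ) ^ 2 else 0 := by
  set V := (U : Matrix (Fin d) (Fin d) ℂ)
  have h_coeff : ∏ i, (g (a i) * g (a (π i)) : ℂ) = ∏ i, (g (a i) : ℂ) ^ 2 := by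
    rw [Finset.prod_mul_distrib, Equiv.prod_comp π (fun j => (g (a j) : ℂ)),
      ← Finset.prod_mul_distrib]
    simp only [sq]
  have h_factor : ∀ b : Fin t → Fin d,
      ∏ i, schmidtProj d g U (a i, b i) (a (π i), b (σ i)) = (∏ i, (g (a i) : ℂ) ^ 2) *
        ∏ i, star (V ((b ∘ σ) i) ((a ∘ π) i)) * V ((b ∘ σ) i) ((a ∘ σ) i) := by
    intro b
    simp only [schmidtProj_apply]
    rw [Finset.prod_mul_distrib, h_coeff, Finset.prod_mul_distrib, Finset.prod_mul_distrib,
      ← Equiv.prod_comp σ (fun i => V (b i) (a i))]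
    rfl
  simp_rw [h_factor, ← Finset.mul_sum]
  have h_reindex : ∑ b : Fin t → Fin d,
      ∏ i, star (V ((b ∘ σ) i) ((a ∘ π) i)) * V ((b ∘ σ) i) ((a ∘ σ) i) =
        ∑ b : Fin t → Fin d, ∏ i, star (V (b i) ((a ∘ π) i)) * V (b i) ((a ∘ σ) i) :=
    Fintype.sum_equiv (Equiv.arrowCongr σ.symm (Equiv.refl (Fin d))) _ _ fun _ => rfl
  rw [h_reindex, sum_prod_star_mul_of_mem_unitaryGroup U.2, mul_ite, mul_one, mul_zero]
  simp only [Perm.comp_eq_comp_iff_comp_mul_inv_eq]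

theorem stmt_12_general (d : ℕ) (g : Fin d → ℝ)
    (U : Matrix.unitaryGroup (Fin d) ℂ) (t : ℕ)
    (π σ : Equiv.Perm (Fin t)) :
    ((permOp (Fin d) π ⊗ₖ permOp (Fin d) σ) *
        Matrix.reindex (Equiv.arrowProdEquivProdArrow (Fin t) (fun _ => Fin d) (fun _ => Fin d))
          (Equiv.arrowProdEquivProdArrow (Fin t) (fun _ => Fin d) (fun _ => Fin d))
          (kpow (schmidtProj d g U) t)).trace =
      ∏ᶠ O : MulAction.orbitRel.Quotient (Subgroup.zpowers (σ * π⁻¹)) (Fin t),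
        ∑ i : Fin d, ((g i : ℂ)) ^ (2 * O.orbit.ncard) := by
  rw [trace_kronecker_permOp_mul, Fintype.sum_prod_type]
  simp only [reindex_apply, submatrix_apply, kpow, of_apply, arrowProdEquivProdArrow_symm_apply,
    Function.comp_apply, sum_prod_schmidtProj]
  rw [← Finset.sum_filter, Perm.sum_prod_of_comp_eq_self _ fun i => (g i : ℂ) ^ 2]
  simp only [pow_mul]

theorem stmt_12 (d : ℕ) (hd : 1 ≤ d) (g : Fin d → ℝ) (hg : ∀ i, 0 ≤ g i)
    (U : Matrix.unitaryGroup (Fin d) ℂ) (t : ℕ) (ht : 1 ≤ t)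
    (π σ : Equiv.Perm (Fin t)) :
    ((permOp (Fin d) π ⊗ₖ permOp (Fin d) σ) *
        Matrix.reindex (Equiv.arrowProdEquivProdArrow (Fin t) (fun _ => Fin d) (fun _ => Fin d))
          (Equiv.arrowProdEquivProdArrow (Fin t) (fun _ => Fin d) (fun _ => Fin d))
          (kpow (schmidtProj d g U) t)).trace =
      ∏ᶠ O : MulAction.orbitRel.Quotient (Subgroup.zpowers (σ * π⁻¹)) (Fin t),
        ∑ i : Fin d, ((g i : ℂ)) ^ (2 * O.orbit.ncard) :=
  stmt_12_general d g U t π σ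
end
end

section
/- Let dA, dB ≥ 1 and let ρ be a positive semidefinite complex matrix indexed by Fin dA × Fin dB with Tr[ρ] = 1 (a bipartite density matrix). Then for every t ≥ 1 and all permutations π, σ of Fin t, the complex number Tr[(W_π^A ⊗ W_σ^B) · R] has absolute value at most 1, where R is the reindexed t-fold Kronecker power ρ^{⊗t}, W_π^A is the permutation operator of local dimension dA and W_σ^B of local dimension dB. (Paper's Proposition 13.) -/
/-!
`W_π^A ⊗ W_σ^B` is the permutation matrix of a permutation `τ` of the index set, so the
trace equals `∑ p, R (τ p) p`. Since `R` is positive semidefinite it is a Gram matrix, and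
Cauchy–Schwarz with AM–GM bounds `|R (τ p) p|` by the mean of the diagonal entries
`R (τ p) (τ p)` and `R p p`. Summing over `p` gives at most `Re Tr R = (Tr ρ)^t = 1`.
-/

open Matrix Kronecker
open scoped ComplexOrder

noncomputable section

lemma kpow_mul {I : Type*} [Fintype I] (M N : Matrix I I ℂ) (t : ℕ) :
    kpow (M * N) t = kpow M t * kpow N t := by
  ext a b
  simp only [kpow, mul_apply, of_apply, Fintype.prod_sum, ← Finset.prod_mul_distrib]

lemma kpow_conjTranspose {I : Type*} (M : Matrix I I ℂ) (t : ℕ) :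
    kpow Mᴴ t = (kpow M t)ᴴ := by
  ext a b
  simp [kpow, conjTranspose_apply, star_prod]

lemma trace_kpow {I : Type*} [Fintype I] (M : Matrix I I ℂ) (t : ℕ) :
    (kpow M t).trace = M.trace ^ t := by
  simp only [trace, diag, kpow, of_apply, Fintype.sum_pow]

open scoped MatrixOrder in
lemma Matrix.PosSemidef.kpow {I : Type*} [Fintype I] [DecidableEq I] {M : Matrix I I ℂ}
    (hM : M.PosSemidef) (t : ℕ) : (_root_.kpow M t).PosSemidef := by
  obtain ⟨B, rfl⟩ := CStarAlgebra.nonneg_iff_eq_star_mul_self.mp hM.nonneg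
  rw [star_eq_conjTranspose, kpow_mul, kpow_conjTranspose]
  exact posSemidef_conjTranspose_mul_self _

lemma permOp_eq_permMatrix (I : Type*) [DecidableEq I] {t : ℕ} (π : Equiv.Perm (Fin t)) :
    permOp I π = Equiv.Perm.permMatrix ℂ (π.arrowCongr (Equiv.refl I)) := by
  ext b a
  simp only [permOp, of_apply, PEquiv.toMatrix_apply, Equiv.toPEquiv_apply, Option.mem_def,
    Option.some.injEq]
  exact if_congr (π.comp_symm_eq a b).symm rfl rfl

lemma Matrix.kronecker_permMatrix {R m n : Type*} [MulZeroOneClass R] [DecidableEq m]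
    [DecidableEq n] (σ : Equiv.Perm m) (τ : Equiv.Perm n) :
    σ.permMatrix R ⊗ₖ τ.permMatrix R = Equiv.Perm.permMatrix R (σ.prodCongr τ) := by
  ext ⟨i, k⟩ ⟨j, l⟩
  simp [PEquiv.toMatrix_apply, ← ite_and, and_comm]

lemma Matrix.trace_permMatrix_mul {R n : Type*} [NonAssocSemiring R] [Fintype n]
    [DecidableEq n]     (σ : Equiv.Perm n) (M : Matrix n n R) :
    (σ.permMatrix R * M).trace = ∑ i, M (σ i) i := by
  rw [PEquiv.toMatrix_toPEquiv_mul]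
  rfl

lemma Matrix.trace_reindex {R m n : Type*} [AddCommMonoid R] [Fintype m] [Fintype n]
    (e : m ≃ n) (M : Matrix m m R) : (reindex e e M).trace = M.trace :=
  e.symm.sum_comp fun i => M i i

open scoped MatrixOrder in
lemma Matrix.PosSemidef.exists_eq_gram {𝕜 n : Type*} [RCLike 𝕜] [Fintype n] [DecidableEq n]
    {M : Matrix n n 𝕜} (hM : M.PosSemidef) :
    ∃ v : n → EuclideanSpace 𝕜 n, M = gram 𝕜 v := by
  obtain ⟨B, rfl⟩ := CStarAlgebra.nonneg_iff_eq_star_mul_self.mp hM.nonneg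
  refine ⟨fun i => WithLp.toLp 2 (fun k => B k i), ?_⟩
  ext i j
  simp [gram_apply, mul_apply, PiLp.inner_apply, mul_comm]

lemma Matrix.PosSemidef.norm_apply_le {𝕜 n : Type*} [RCLike 𝕜] [Fintype n] [DecidableEq n]
    {M : Matrix n n 𝕜} (hM : M.PosSemidef) (i j : n) :
    ‖M i j‖ ≤ (RCLike.re (M i i) + RCLike.re (M j j)) / 2 := by
  obtain ⟨v, rfl⟩ := hM.exists_eq_gram
  simp only [gram_apply, inner_self_eq_norm_sq]
  nlinarith [norm_inner_le_norm (𝕜 := 𝕜) (v i) (v j), two_mul_le_add_sq ‖v i‖ ‖v j‖]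

lemma Matrix.PosSemidef.norm_sum_apply_perm_le {𝕜 n : Type*} [RCLike 𝕜] [Fintype n]
    [DecidableEq n] {M : Matrix n n 𝕜} (hM : M.PosSemidef) (σ : Equiv.Perm n) :
    ‖∑ i, M (σ i) i‖ ≤ RCLike.re M.trace := by
  calc ‖∑ i, M (σ i) i‖
      ≤ ∑ i, ‖M (σ i) i‖ := norm_sum_le _ _
    _ ≤ ∑ i, (RCLike.re (M (σ i) (σ i)) + RCLike.re (M i i)) / 2 :=
        Finset.sum_le_sum fun i _ => hM.norm_apply_le _ _
    _ = RCLike.re M.trace := by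
        rw [← Finset.sum_div, Finset.sum_add_distrib,
          Equiv.sum_comp σ fun i => RCLike.re (M i i)]
        simp [trace, map_sum]

theorem stmt_13_general (dA dB : ℕ)
    (ρ : Matrix (Fin dA × Fin dB) (Fin dA × Fin dB) ℂ)
    (hρ : ρ.PosSemidef) (hTr : ρ.trace = 1)
    (t : ℕ) (π σ : Equiv.Perm (Fin t)) :
    ‖((permOp (Fin dA) π ⊗ₖ permOp (Fin dB) σ) *
        Matrix.reindex (Equiv.arrowProdEquivProdArrow (Fin t) (fun _ => Fin dA) (fun _ => Fin dB))
          (Equiv.arrowProdEquivProdArrow (Fin t) (fun _ => Fin dA) (fun _ => Fin dB))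
          (kpow ρ t)).trace‖ ≤ 1 := by
  set e := Equiv.arrowProdEquivProdArrow (Fin t) (fun _ => Fin dA) (fun _ => Fin dB)
  rw [permOp_eq_permMatrix, permOp_eq_permMatrix, kronecker_permMatrix, trace_permMatrix_mul]
  refine (((hρ.kpow t).submatrix e.symm).norm_sum_apply_perm_le _).trans_eq ?_
  rw [← reindex_apply, trace_reindex, trace_kpow, hTr, one_pow, RCLike.one_re]

theorem stmt_13 (dA dB : ℕ) (hA : 1 ≤ dA) (hB : 1 ≤ dB)
    (ρ : Matrix (Fin dA × Fin dB) (Fin dA × Fin dB) ℂ)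
    (hρ : ρ.PosSemidef) (hTr : ρ.trace = 1)
    (t : ℕ) (ht : 1 ≤ t) (π σ : Equiv.Perm (Fin t)) :
    ‖((permOp (Fin dA) π ⊗ₖ permOp (Fin dB) σ) *
        Matrix.reindex (Equiv.arrowProdEquivProdArrow (Fin t) (fun _ => Fin dA) (fun _ => Fin dB))
          (Equiv.arrowProdEquivProdArrow (Fin t) (fun _ => Fin dA) (fun _ => Fin dB))
          (kpow ρ t)).trace‖ ≤ 1 :=
  stmt_13_general dA dB ρ hρ hTr t π σ
end
end

section
/- Let dA, dB ≥ 1 and let ρ be any complex matrix indexed by Fin dA × Fin dB. Define the marginals ρ_A (indexed by Fin dA) by ρ_A[a, a'] = Σ_b ρ[(a,b),(a',b)] and ρ_B (indexed by Fin dB) by ρ_B[b, b'] = Σ_a ρ[(a,b),(a,b')]. Let τ_A be the transposition of Fin 3 swapping 0 and 1, and τ_B the transposition swapping 1 and 2. Then Tr[(W_{τ_A}^A ⊗ W_{τ_B}^B) · R] = Tr[ρ · (ρ_A ⊗ ρ_B)], where R is the reindexed 3-fold Kronecker power ρ^{⊗3}. (The paper's identity underlying the total-correlation quantifier: Tr[ρ_{AB}(ρ_A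 ⊗ ρ_B)] equals the expectation of distinct transposition operators on the two subsystems.) -/
open Matrix Kronecker

noncomputable section

/-- Marginal on the `A` subsystem. -/
def margA {dA dB : ℕ} (ρ : Matrix (Fin dA × Fin dB) (Fin dA × Fin dB) ℂ) :
    Matrix (Fin dA) (Fin dA) ℂ :=
  Matrix.of fun a a' => ∑ b : Fin dB, ρ (a, b) (a', b)

/-- Marginal on the `B` subsystem. -/
def margB {dA dB : ℕ} (ρ : Matrix (Fin dA × Fin dB) (Fin dA × Fin dB) ℂ) :
    Matrix (Fin dB) (Fin dB) ℂ :=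
  Matrix.of fun b b' => ∑ a : Fin dA, ρ (a, b) (a, b')

/-!
Against a Kronecker power, a permutation operator only relabels copies, so
`Tr[(W_σ ⊗ W_τ) ρ^{⊗t}] = ∑_{a,b} ∏_i ρ[(a_{σ⁻¹ i}, b_{τ⁻¹ i}), (a_i, b_i)]`.
For `σ = (0 1)` and `τ = (1 2)` the three factors are `ρ[(a₁,b₀),(a₀,b₀)]`,
`ρ[(a₀,b₂),(a₁,b₁)]` and `ρ[(a₂,b₁),(a₂,b₂)]`. The index `b₀` occurs only in the first and
`a₂` only in the last, so summing them out produces `ρ_A[a₁,a₀]` and `ρ_B[b₁,b₂]`, and what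
remains is `∑ ρ[(a₀,b₂),(a₁,b₁)] ρ_A[a₁,a₀] ρ_B[b₁,b₂] = Tr[ρ (ρ_A ⊗ ρ_B)]`.
-/

section PermOp

open Equiv

variable {A B : Type*} [DecidableEq A] [DecidableEq B] {t : ℕ}

theorem permOp_apply (π : Perm (Fin t)) (b a : Fin t → A) :
    permOp A π b a = if a = b ∘ π.symm then 1 else 0 :=
  if_congr (by rw [eq_comp_symm, eq_comm]) rfl rfl

variable [Fintype A] [Fintype B]

theorem kronecker_permOp_mul_apply {κ : Type*} (σ τ : Perm (Fin t))
    (N : Matrix ((Fin t → A) × (Fin t → B)) κ ℂ) (x : (Fin t → A) × (Fin t → B)) (y : κ) :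
    ((permOp A σ ⊗ₖ permOp B τ) * N) x y = N (x.1 ∘ σ.symm, x.2 ∘ τ.symm) y := by
  simp only [mul_apply, Fintype.sum_prod_type, kroneckerMap_apply, permOp_apply, ite_mul,
    one_mul, zero_mul, mul_ite, mul_one, mul_zero, Finset.sum_ite_eq', Finset.mem_univ, if_true]

theorem trace_kronecker_permOp_mul_kpow (σ τ : Perm (Fin t)) (ρ : Matrix (A × B) (A × B) ℂ) :
    ((permOp A σ ⊗ₖ permOp B τ) *
        reindex (arrowProdEquivProdArrow (Fin t) (fun _ => A) (fun _ => B))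
          (arrowProdEquivProdArrow (Fin t) (fun _ => A) (fun _ => B)) (kpow ρ t)).trace =
      ∑ x : (Fin t → A) × (Fin t → B), ∏ i, ρ (x.1 (σ.symm i), x.2 (τ.symm i)) (x.1 i, x.2 i) := by
  simp only [trace, diag, kronecker_permOp_mul_apply]
  rfl

end PermOp

theorem trace_mul_kronecker_margA_margB {dA dB : ℕ}
    (ρ : Matrix (Fin dA × Fin dB) (Fin dA × Fin dB) ℂ) :
    (ρ * (margA ρ ⊗ₖ margB ρ)).trace =
      ∑ p, ∑ q, ∑ a, ∑ b, ρ p q * (ρ (q.1, b) (p.1, b) * ρ (a, q.2) (a, p.2)) := by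
  simp only [trace, diag, mul_apply, kroneckerMap_apply, margA, margB, of_apply,
    Finset.mul_sum, Finset.sum_mul]

theorem stmt_14_general (dA dB : ℕ)
    (ρ : Matrix (Fin dA × Fin dB) (Fin dA × Fin dB) ℂ) :
    ((permOp (Fin dA) (Equiv.swap 0 1) ⊗ₖ permOp (Fin dB) (Equiv.swap 1 2)) *
        Matrix.reindex (Equiv.arrowProdEquivProdArrow (Fin 3) (fun _ => Fin dA) (fun _ => Fin dB))
          (Equiv.arrowProdEquivProdArrow (Fin 3) (fun _ => Fin dA) (fun _ => Fin dB))
          (kpow ρ 3)).trace =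
      (ρ * (margA ρ ⊗ₖ margB ρ)).trace := by
  rw [trace_kronecker_permOp_mul_kpow, trace_mul_kronecker_margA_margB]
  simp only [← Fintype.sum_prod_type']
  let e : (Fin 3 → Fin dA) × (Fin 3 → Fin dB) ≃
      (Fin dA × Fin dB) × (Fin dA × Fin dB) × Fin dA × Fin dB :=
    { toFun := fun x => ((x.1 0, x.2 2), (x.1 1, x.2 1), x.1 2, x.2 0)
      invFun := fun ⟨(a₀, b₂), (a₁, b₁), a₂, b₀⟩ => (![a₀, a₁, a₂], ![b₀, b₁, b₂])
      left_inv := fun x => Prod.ext (funext fun i => by fin_cases i <;> rfl)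
        (funext fun i => by fin_cases i <;> rfl)
      right_inv := fun _ => rfl }
  refine Fintype.sum_equiv e _ _ fun x => ?_
  show _ = ρ (x.1 0, x.2 2) (x.1 1, x.2 1) *
    (ρ (x.1 1, x.2 0) (x.1 0, x.2 0) * ρ (x.1 2, x.2 1) (x.1 2, x.2 2))
  simp only [Equiv.symm_swap, Fin.prod_univ_three, Equiv.swap_apply_left, Equiv.swap_apply_right,
    Equiv.swap_apply_of_ne_of_ne, ne_eq, Fin.reduceEq, not_false_eq_true]
  ring

theorem stmt_14 (dA dB : ℕ) (hA : 1 ≤ dA) (hB : 1 ≤ dB)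
    (ρ : Matrix (Fin dA × Fin dB) (Fin dA × Fin dB) ℂ) :
    ((permOp (Fin dA) (Equiv.swap 0 1) ⊗ₖ permOp (Fin dB) (Equiv.swap 1 2)) *
        Matrix.reindex (Equiv.arrowProdEquivProdArrow (Fin 3) (fun _ => Fin dA) (fun _ => Fin dB))
          (Equiv.arrowProdEquivProdArrow (Fin 3) (fun _ => Fin dA) (fun _ => Fin dB))
          (kpow ρ 3)).trace =
      (ρ * (margA ρ ⊗ₖ margB ρ)).trace :=
  stmt_14_general dA dB ρ
end
end
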